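/- Suppose H is a subgroup of PL₊(I) with orbital A, and some h ∈ H has an orbital B ⊆ A sharing exactly one end of A, while no other orbital of h shares an end with A and h does not realize the other end of A. Then the subgroup ⟨h⟩ together with suitable conjugates inside H yields a transition chain of length two in H; that is, H admits two element-orbitals (a₁,a₂) and (b₁,b₂) with a₁ < b₁ < a₂ < b₂. -/

import Mathlib

/-- The support of a map of the line: points it moves. -/
def Supp (f : ℝ → ℝ) : Set ℝ := {x | f x ≠ x}

/-- `A` is an orbital of `f`: a connected component of the support of `f`. -/
def IsOrbital (f : ℝ → ℝ) (A : Set ℝ) : Prop :=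
  ∃ x ∈ Supp f, A = connectedComponentIn (Supp f) x

/-- An orientation-preserving homeomorphism of `[0,1]`, encoded as a strictly
increasing bijection of `ℝ` fixing every point outside `(0,1)`. -/
def Homeo01 (f : Equiv.Perm ℝ) : Prop :=
  StrictMono f ∧ ∀ x ∉ Set.Ioo (0:ℝ) 1, f x = x

/-- `f` is affine in a neighbourhood of `x`. -/
def LocallyAffineAt (f : ℝ → ℝ) (x : ℝ) : Prop :=
  ∃ ε > 0, ∃ m b : ℝ, ∀ y : ℝ, |y - x| < ε → f y = m * y + b

/-- Piecewise linear with finitely many breakpoints. -/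
def IsPL (f : ℝ → ℝ) : Prop := {x | ¬ LocallyAffineAt f x}.Finite

/-- Membership in `PL₊(I)`. -/
def PLHomeo (f : Equiv.Perm ℝ) : Prop := Homeo01 f ∧ IsPL f

/-- Support of the action of a subgroup. -/
def GSupp (G : Subgroup (Equiv.Perm ℝ)) : Set ℝ := {x | ∃ g ∈ G, g x ≠ x}

/-- An orbital of a subgroup: a component of the support of its action. -/
def IsGroupOrbital (G : Subgroup (Equiv.Perm ℝ)) (A : Set ℝ) : Prop :=
  ∃ x ∈ GSupp G, A = connectedComponentIn (GSupp G) x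

/-- `b` is a breakpoint of `f`: one-sided derivatives exist but differ. -/
def Breakpoint (f : ℝ → ℝ) (b : ℝ) : Prop :=
  b ∈ Set.Ioo (0:ℝ) 1 ∧
  DifferentiableWithinAt ℝ f (Set.Iio b) b ∧
  DifferentiableWithinAt ℝ f (Set.Ioi b) b ∧
  derivWithin f (Set.Iio b) b ≠ derivWithin f (Set.Ioi b) b

/-- `G` admits a transition chain of length two. -/
def HasTransitionChain2 (G : Subgroup (Equiv.Perm ℝ)) : Prop :=
  ∃ g ∈ G, ∃ h ∈ G, ∃ a₁ b₁ a₂ b₂ : ℝ,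
    IsOrbital g (Set.Ioo a₁ a₂) ∧ IsOrbital h (Set.Ioo b₁ b₂) ∧
    a₁ < b₁ ∧ b₁ < a₂ ∧ a₂ < b₂

/-- A tower of the subgroup `G`: a set of signed orbitals `(A, g)` whose orbitals
form a chain under inclusion, with exactly one signature per orbital. -/
def IsTower (G : Subgroup (Equiv.Perm ℝ)) (T : Set (Set ℝ × Equiv.Perm ℝ)) : Prop :=
  (∀ p ∈ T, p.2 ∈ G ∧ IsOrbital p.2 p.1) ∧
  (∀ p ∈ T, ∀ q ∈ T, p.1 ⊆ q.1 ∨ q.1 ⊆ p.1) ∧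
  (∀ p ∈ T, ∀ q ∈ T, p.1 = q.1 → p = q)

/-- The depth of `G` equals `n`: there is a tower of height `n` and every tower
is finite with height at most `n`. -/
def DepthEq (G : Subgroup (Equiv.Perm ℝ)) (n : ℕ) : Prop :=
  (∃ T, IsTower G T ∧ T.Finite ∧ T.ncard = n) ∧
  ∀ T, IsTower G T → T.Finite ∧ T.ncard ≤ n

/-!
Every element of `H` fixes the end `a` of its orbital and, being PL, acts near `a` on the right
as `y ↦ a + m (y - a)`. These germs form an abelian group, so a commutator `⁅g, h⁆` with
`g ∈ H` is the identity on some `(a, a + ε)`. Choosing `g` with `g⁻¹ d ∈ (a, d)` makes `⁅g, h⁆`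
move `d`, since `h` fixes `d` but moves `g⁻¹ d`. The orbital `(c, e)` of `⁅g, h⁆` through `d`
then starts at some `c > a`, so `a < c < d < e` and together with the orbital `(a, d)` of `h`
it is a transition chain.
-/

open Set Filter Topology
open scoped commutatorElement

lemma IsOpen.mem_connectedComponentIn_of_mem_closure {X : Type*} [TopologicalSpace X]
    [LocallyConnectedSpace X] {F : Set X} (hF : IsOpen F) {x y : X} (hy : y ∈ F)
    (hcl : y ∈ closure (connectedComponentIn F x)) : y ∈ connectedComponentIn F x := by
  obtain ⟨z, hzy, hzx⟩ := mem_closure_iff_nhds.mp hcl _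
    (hF.connectedComponentIn.mem_nhds (mem_connectedComponentIn hy))
  rw [connectedComponentIn_eq hzx, ← connectedComponentIn_eq hzy]
  exact mem_connectedComponentIn hy

lemma IsOpen.notMem_of_connectedComponentIn_eq_Ioo {F : Set ℝ} (hF : IsOpen F) {x u v : ℝ}
    (huv : u < v) (h : connectedComponentIn F x = Ioo u v) : u ∉ F ∧ v ∉ F := by
  have key : ∀ y ∈ Icc u v, y ∈ F → y ∈ Ioo u v := fun y hy hyF => by
    rw [← h]
    exact hF.mem_connectedComponentIn_of_mem_closure hyF (by rwa [h, closure_Ioo huv.ne])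
  exact ⟨fun hu => (key u (left_mem_Icc.2 huv.le) hu).1.false,
    fun hv => (key v (right_mem_Icc.2 huv.le) hv).2.false⟩

lemma IsOpen.eq_Ioo_csInf_csSup {α : Type*} [ConditionallyCompleteLinearOrder α]
    [TopologicalSpace α] [OrderTopology α] [DenselyOrdered α] [NoMinOrder α] [NoMaxOrder α]
    {C : Set α} (hC : IsOpen C) (hpc : IsPreconnected C) (hne : C.Nonempty) (hb : BddBelow C)
    (ha : BddAbove C) : C = Ioo (sInf C) (sSup C) := by
  refine Subset.antisymm (fun x hx => ?_) (IsConnected.Ioo_csInf_csSup_subset ⟨hne, hpc⟩ hb ha)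
  obtain ⟨y, hyx, hy⟩ := Eventually.exists_lt (hC.mem_nhds hx)
  obtain ⟨z, hxz, hz⟩ := Eventually.exists_gt (hC.mem_nhds hx)
  exact ⟨(csInf_le hb hy).trans_lt hyx, hxz.trans_le (le_csSup ha hz)⟩

namespace Homeo01

variable {f : Equiv.Perm ℝ}

lemma continuous (hf : Homeo01 f) : Continuous f :=
  hf.1.monotone.continuous_of_surjective f.surjective

lemma isOpen_supp (hf : Homeo01 f) : IsOpen (Supp f) :=
  isOpen_ne_fun hf.continuous continuous_id

lemma supp_subset_Ioo (hf : Homeo01 f) : Supp f ⊆ Ioo 0 1 :=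
  fun x hx => by_contra fun hx' => hx (hf.2 x hx')

lemma exists_connectedComponentIn_supp_eq_Ioo (hf : Homeo01 f) {x : ℝ} (hx : x ∈ Supp f) :
    ∃ c e, c < x ∧ x < e ∧ connectedComponentIn (Supp f) x = Ioo c e := by
  set C := connectedComponentIn (Supp f) x
  have hC : C ⊆ Ioo 0 1 := (connectedComponentIn_subset _ _).trans hf.supp_subset_Ioo
  have hCeq := hf.isOpen_supp.connectedComponentIn.eq_Ioo_csInf_csSup
    isPreconnected_connectedComponentIn ⟨x, mem_connectedComponentIn hx⟩
    (bddBelow_Ioo.mono hC) (bddAbove_Ioo.mono hC)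
  have hxC : x ∈ Ioo (sInf C) (sSup C) := hCeq ▸ mem_connectedComponentIn hx
  exact ⟨_, _, hxC.1, hxC.2, hCeq⟩

end Homeo01

lemma IsOrbital.subset_supp {f : ℝ → ℝ} {A : Set ℝ} (h : IsOrbital f A) : A ⊆ Supp f := by
  obtain ⟨x, -, rfl⟩ := h
  exact connectedComponentIn_subset _ _

lemma IsOrbital.apply_right_eq {f : Equiv.Perm ℝ} (hf : Homeo01 f) {u v : ℝ}
    (h : IsOrbital f (Ioo u v)) (huv : u < v) : f v = v := by
  obtain ⟨x, -, hx⟩ := h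
  exact not_not.1 (hf.isOpen_supp.notMem_of_connectedComponentIn_eq_Ioo huv hx.symm).2

lemma isOpen_gSupp {G : Subgroup (Equiv.Perm ℝ)} (hG : ∀ g ∈ G, Homeo01 g) :
    IsOpen (GSupp G) := by
  have : GSupp G = ⋃ g ∈ G, Supp g := by ext x; simp [GSupp, Supp]
  rw [this]
  exact isOpen_biUnion fun g hg => (hG g hg).isOpen_supp

namespace IsGroupOrbital

variable {G : Subgroup (Equiv.Perm ℝ)} {u v : ℝ}

lemma subset_gSupp (h : IsGroupOrbital G (Ioo u v)) : Ioo u v ⊆ GSupp G := by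
  obtain ⟨x, -, hx⟩ := h
  exact hx ▸ connectedComponentIn_subset _ _

lemma apply_left_eq (hG : ∀ g ∈ G, Homeo01 g) (h : IsGroupOrbital G (Ioo u v)) (huv : u < v)
    {g : Equiv.Perm ℝ} (hg : g ∈ G) : g u = u := by
  obtain ⟨x, -, hx⟩ := h
  by_contra hgu
  exact (isOpen_gSupp hG).notMem_of_connectedComponentIn_eq_Ioo huv hx.symm |>.1 ⟨g, hg, hgu⟩

end IsGroupOrbital

lemma LocallyAffineAt.exists_eventuallyEq {f : ℝ → ℝ} {x : ℝ} (h : LocallyAffineAt f x) :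
    ∃ m b : ℝ, f =ᶠ[𝓝 x] fun y => m * y + b := by
  obtain ⟨ε, hε, m, b, hf⟩ := h
  exact ⟨m, b, eventually_of_mem (Metric.ball_mem_nhds x hε) fun y hy =>
    hf y (by rwa [Metric.mem_ball, Real.dist_eq] at hy)⟩

/-- Locally affine functions are analytic, so the identity principle applies. -/
lemma IsPreconnected.exists_eqOn_affine {U : Set ℝ} (hU : IsPreconnected U) (hne : U.Nonempty)
    {f : ℝ → ℝ} (hf : ∀ x ∈ U, LocallyAffineAt f x) :
    ∃ m b : ℝ, EqOn f (fun y => m * y + b) U := by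
  obtain ⟨x₀, hx₀⟩ := hne
  obtain ⟨m, b, hfx₀⟩ := (hf x₀ hx₀).exists_eventuallyEq
  have hfan : AnalyticOnNhd ℝ f U := fun x hx => by
    obtain ⟨m', b', hfx⟩ := (hf x hx).exists_eventuallyEq
    exact (show AnalyticAt ℝ (fun y => m' * y + b') x by fun_prop).congr hfx.symm
  exact ⟨m, b, hfan.eqOn_of_preconnected_of_eventuallyEq (fun y _ => by fun_prop) hU hx₀ hfx₀⟩

def HasLinearRightGerm (f : ℝ → ℝ) (a m : ℝ) : Prop :=
  0 < m ∧ f =ᶠ[𝓝[>] a] fun y => a + m * (y - a)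

lemma hasLinearRightGerm_id (a : ℝ) : HasLinearRightGerm id a 1 :=
  ⟨one_pos, Eventually.of_forall fun y => by simp⟩

namespace HasLinearRightGerm

variable {f g : ℝ → ℝ} {a m n : ℝ}

lemma tendsto (hf : HasLinearRightGerm f a m) : Tendsto f (𝓝[>] a) (𝓝[>] a) := by
  have hlin : Tendsto (fun y => a + m * (y - a)) (𝓝[>] a) (𝓝[>] a) := by
    refine tendsto_nhdsWithin_of_tendsto_nhds_of_eventually_within _ ?_ ?_
    · have : Continuous fun y => a + m * (y - a) := by fun_prop
      simpa using this.tendsto a |>.mono_left nhdsWithin_le_nhds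
    · filter_upwards [self_mem_nhdsWithin] with y (hy : a < y)
      exact lt_add_of_pos_right a (mul_pos hf.1 (sub_pos.2 hy))
  exact hlin.congr' hf.2.symm

lemma comp (hf : HasLinearRightGerm f a m) (hg : HasLinearRightGerm g a n) :
    HasLinearRightGerm (f ∘ g) a (m * n) := by
  refine ⟨mul_pos hf.1 hg.1, ?_⟩
  filter_upwards [hg.2, hg.tendsto.eventually hf.2] with y hgy hfy
  rw [Function.comp_apply, hfy, hgy]
  ring

lemma unique (hm : HasLinearRightGerm f a m) (hn : HasLinearRightGerm f a n) : m = n := by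
  obtain ⟨y, hy, hay⟩ := ((hm.2.symm.trans hn.2).and self_mem_nhdsWithin).exists
  have hya : 0 < y - a := sub_pos.2 hay
  exact mul_right_cancel₀ hya.ne' (by linarith)

lemma eventuallyEq_id (hf : HasLinearRightGerm f a 1) : f =ᶠ[𝓝[>] a] id :=
  hf.2.trans (Eventually.of_forall fun y => by simp)

end HasLinearRightGerm

lemma PLHomeo.exists_hasLinearRightGerm {f : Equiv.Perm ℝ} (hf : PLHomeo f) {a : ℝ}
    (ha : f a = a) : ∃ m, HasLinearRightGerm f a m := by
  obtain ⟨e, hae, he⟩ : ∃ e > a, ∀ x ∈ Ioo a e, LocallyAffineAt f x := by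
    have hS : ({x | ¬ LocallyAffineAt f x} \ {a})ᶜ ∈ 𝓝 a :=
      hf.2.sdiff.isClosed.compl_mem_nhds fun h => h.2 rfl
    have : ∀ᶠ x in 𝓝[>] a, LocallyAffineAt f x := by
      filter_upwards [nhdsWithin_le_nhds hS, self_mem_nhdsWithin] with x hxS hxa
      by_contra hx
      exact hxS ⟨hx, hxa.ne'⟩
    exact mem_nhdsGT_iff_exists_Ioo_subset.1 this
  obtain ⟨m, b, hfU⟩ := isPreconnected_Ioo.exists_eqOn_affine (nonempty_Ioo.2 hae) he
  have hfU' : EqOn f (fun y => m * y + b) (Ico a e) :=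
    hfU.of_subset_closure hf.1.continuous.continuousOn (by fun_prop) Ioo_subset_Ico_self
      (closure_Ioo hae.ne ▸ Ico_subset_Icc_self)
  have hb : b = a - m * a := by
    have := hfU' (left_mem_Ico.2 hae)
    simp only [ha] at this
    linarith
  have hm : 0 < m := by
    obtain ⟨y, hy⟩ := nonempty_Ioo.2 hae
    have hlt := hf.1.1 hy.1
    rw [hfU' (left_mem_Ico.2 hae), hfU hy] at hlt
    nlinarith [hy.1]
  refine ⟨m, hm, ?_⟩
  filter_upwards [Ioo_mem_nhdsGT hae] with y hy
  rw [hfU hy, hb]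
  ring

lemma commutator_eventuallyEq_id {G : Subgroup (Equiv.Perm ℝ)} (hG : ∀ g ∈ G, PLHomeo g)
    {a : ℝ} (hfix : ∀ g ∈ G, g a = a) {g h : Equiv.Perm ℝ} (hg : g ∈ G) (hh : h ∈ G) :
    ⇑⁅g, h⁆ =ᶠ[𝓝[>] a] id := by
  have germ : ∀ k ∈ G, ∃ m m', HasLinearRightGerm k a m ∧ HasLinearRightGerm ⇑k⁻¹ a m' ∧
      m * m' = 1 := by
    intro k hk
    obtain ⟨m, hm⟩ := (hG k hk).exists_hasLinearRightGerm (hfix k hk)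
    obtain ⟨m', hm'⟩ := (hG _ (inv_mem hk)).exists_hasLinearRightGerm (hfix _ (inv_mem hk))
    refine ⟨m, m', hm, hm', (hm.comp hm').unique ?_⟩
    rw [← Equiv.Perm.coe_mul, mul_inv_cancel, Equiv.Perm.coe_one]
    exact hasLinearRightGerm_id a
  obtain ⟨μ, μ', hμ, hμ', hμμ'⟩ := germ g hg
  obtain ⟨m, m', hm, hm', hmm'⟩ := germ h hh
  have hcomm := ((hμ.comp hm).comp hμ').comp hm'
  rw [show μ * m * μ' * m' = 1 by linear_combination (m * m') * hμμ' + hmm'] at hcomm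
  simpa only [commutatorElement_def, Equiv.Perm.coe_mul] using hcomm.eventuallyEq_id

lemma exists_mem_inv_apply_mem_Ioo {G : Subgroup (Equiv.Perm ℝ)} (hG : ∀ g ∈ G, Homeo01 g)
    {a d : ℝ} (hfix : ∀ g ∈ G, g a = a) (had : a < d) (hd : d ∈ GSupp G) :
    ∃ g ∈ G, g⁻¹ d ∈ Ioo a d := by
  have key : ∀ g ∈ G, d < g d → g⁻¹ d ∈ Ioo a d := fun g hg hgd => by
    have hmono := (hG _ (inv_mem hg)).1
    refine ⟨?_, ?_⟩
    · simpa [hfix _ (inv_mem hg)] using hmono had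
    · simpa using hmono hgd
  obtain ⟨g, hg, hgd⟩ := hd
  rcases hgd.lt_or_gt with hlt | hgt
  · refine ⟨g⁻¹, inv_mem hg, key _ (inv_mem hg) ?_⟩
    simpa using (hG _ (inv_mem hg)).1 hlt
  · exact ⟨g, hg, key g hg hgt⟩

theorem stmt9_general (H : Subgroup (Equiv.Perm ℝ)) (hH : ∀ g ∈ H, PLHomeo g)
    (a b : ℝ) (hA : IsGroupOrbital H (Set.Ioo a b))
    (h : Equiv.Perm ℝ) (hh : h ∈ H) (d : ℝ) (had : a < d) (hdb : d < b)
    (horb : IsOrbital ⇑h (Set.Ioo a d)) :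
    HasTransitionChain2 H := by
  have hHomeo : ∀ g ∈ H, Homeo01 g := fun g hg => (hH g hg).1
  have hfix : ∀ g ∈ H, g a = a := fun g => hA.apply_left_eq hHomeo (had.trans hdb)
  obtain ⟨g, hg, hgd⟩ := exists_mem_inv_apply_mem_Ioo hHomeo hfix had
    (hA.subset_gSupp ⟨had, hdb⟩)
  have hp : ⁅g, h⁆ ∈ H := by
    rw [commutatorElement_def]
    exact mul_mem (mul_mem (mul_mem hg hh) (inv_mem hg)) (inv_mem hh)
  have hpd : ⁅g, h⁆ d ≠ d := by
    have hhd : h⁻¹ d = d := by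
      rw [Equiv.Perm.inv_eq_iff_eq, horb.apply_right_eq (hHomeo h hh) had]
    intro hfixd
    simp only [commutatorElement_def, Equiv.Perm.mul_apply, hhd] at hfixd
    exact horb.subset_supp hgd (Equiv.Perm.eq_inv_iff_eq.2 hfixd)
  obtain ⟨c, e, hcd, hde, hC⟩ := (hHomeo _ hp).exists_connectedComponentIn_supp_eq_Ioo hpd
  have hac : a < c := by
    by_contra! hca
    have hsub : Ioo c e ⊆ Supp ⇑⁅g, h⁆ := hC ▸ connectedComponentIn_subset _ _
    obtain ⟨y, hpy, hy⟩ := ((commutator_eventuallyEq_id hH hfix hg hh).and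
      (Ioo_mem_nhdsGT (had.trans hde))).exists
    exact hsub ⟨hca.trans_lt hy.1, hy.2⟩ hpy
  exact ⟨h, hh, _, hp, a, c, d, e, horb, ⟨d, hpd, hC.symm⟩, hac, hcd, hde⟩

theorem stmt9 (H : Subgroup (Equiv.Perm ℝ)) (hH : ∀ g ∈ H, PLHomeo g)
    (a b : ℝ) (hA : IsGroupOrbital H (Set.Ioo a b))
    (h : Equiv.Perm ℝ) (hh : h ∈ H) (d : ℝ) (had : a < d) (hdb : d < b)
    (horb : IsOrbital ⇑h (Set.Ioo a d))
    (hno : ∀ c e : ℝ, IsOrbital ⇑h (Set.Ioo c e) →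
      (c = a ∧ e = d) ∨ (c ≠ a ∧ c ≠ b ∧ e ≠ a ∧ e ≠ b)) :
    HasTransitionChain2 H :=
  stmt9_general H hH a b hA h hh d had hdb horb
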